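/- In the k=1 Extended Rock-Paper-Scissors game—R_{00} = 0, R_{0j} = 1 for j ≥ 1, R_{i0} = −1 for i ≥ 1, R_{ij} = 0 for i,j ≥ 1—the pure strategy profile (e_0, e_0) is the unique Nash equilibrium, with value 0. -/

import Mathlib

/- Row `0` beats every column but column `0`, and column `0` beats every row but row `0`;
everything else is a draw. Hence against mixed strategies `p` and `q` the payoff is `p 0 - q 0`,
which each player maximises exactly by putting all weight on strategy `0`. -/

open Finset

/-- A mixed strategy: nonnegative entries summing to 1. -/
def isSimplex {n : ℕ} (p : Fin n → ℝ) : Prop := (∀ i, 0 ≤ p i) ∧ ∑ i, p i = 1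

/-- Expected payoff `pᵀ R q` to player 1. -/
noncomputable def pay {m n : ℕ} (R : Matrix (Fin m) (Fin n) ℝ) (p : Fin m → ℝ)
    (q : Fin n → ℝ) : ℝ :=
  ∑ i, ∑ j, p i * R i j * q j

/-- Payoff of pure row `i` against mixed column strategy `q`:  `e_iᵀ R q`. -/
noncomputable def rowPay {m n : ℕ} (R : Matrix (Fin m) (Fin n) ℝ) (i : Fin m)
    (q : Fin n → ℝ) : ℝ :=
  ∑ j, R i j * q j

/-- Payoff of mixed row strategy `p` against pure column `j`:  `pᵀ R e_j`. -/
noncomputable def colPay {m n : ℕ} (R : Matrix (Fin m) (Fin n) ℝ) (p : Fin m → ℝ)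
    (j : Fin n) : ℝ :=
  ∑ i, p i * R i j

/-- Nash equilibrium of the zero-sum matrix game `R`. -/
def isNash {m n : ℕ} (R : Matrix (Fin m) (Fin n) ℝ) (p : Fin m → ℝ)
    (q : Fin n → ℝ) : Prop :=
  isSimplex p ∧ isSimplex q ∧
    (∀ p', isSimplex p' → pay R p' q ≤ pay R p q) ∧
    (∀ q', isSimplex q' → pay R p q ≤ pay R p q')

def extendedRPS (m n : ℕ) : Matrix (Fin (m + 1)) (Fin (n + 1)) ℝ :=
  Matrix.of fun i j =>
    if i = 0 ∧ j = 0 then (0 : ℝ)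
    else if i = 0 then 1
    else if j = 0 then -1
    else 0

section Simplex

variable {n : ℕ}

theorem isSimplex_single (i : Fin n) : isSimplex (Pi.single i 1 : Fin n → ℝ) :=
  ⟨fun j => by rcases eq_or_ne j i with rfl | h <;> simp [*], by simp⟩

theorem isSimplex.apply_le_one {p : Fin n → ℝ} (hp : isSimplex p) (i : Fin n) : p i ≤ 1 :=
  hp.2 ▸ single_le_sum (fun j _ => hp.1 j) (mem_univ i)

theorem isSimplex.eq_single_of_apply_eq_one {p : Fin n → ℝ} (hp : isSimplex p) {i : Fin n}
    (hi : p i = 1) : p = Pi.single i 1 := by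
  have hrest : ∑ j ∈ univ.erase i, p j = 0 := by
    linarith [add_sum_erase univ p (mem_univ i), hp.2]
  have hzero := (sum_eq_zero_iff_of_nonneg fun j _ => hp.1 j).mp hrest
  funext j
  rcases eq_or_ne j i with rfl | hj
  · simp [hi]
  · simp [hj, hzero j (mem_erase.mpr ⟨hj, mem_univ j⟩)]

theorem isSimplex.sum_succ {p : Fin (n + 1) → ℝ} (hp : isSimplex p) :
    ∑ i : Fin n, p i.succ = 1 - p 0 := by
  linarith [hp.2, Fin.sum_univ_succ p]

end Simplex

theorem pay_extendedRPS {m n : ℕ} (p : Fin (m + 1) → ℝ) (q : Fin (n + 1) → ℝ) :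
    pay (extendedRPS m n) p q = p 0 * ∑ j : Fin n, q j.succ - q 0 * ∑ i : Fin m, p i.succ := by
  simp only [pay, extendedRPS, Matrix.of_apply, mul_ite, mul_zero, mul_one, mul_neg, mul_comm,
    Fin.sum_univ_succ, and_true, ↓reduceIte, Fin.succ_ne_zero, and_false, sum_ite_irrel,
    sum_const_zero, zero_add, add_zero, sum_neg_distrib, mul_sum]
  ring

theorem pay_extendedRPS_of_isSimplex {m n : ℕ} {p : Fin (m + 1) → ℝ} {q : Fin (n + 1) → ℝ}
    (hp : isSimplex p) (hq : isSimplex q) : pay (extendedRPS m n) p q = p 0 - q 0 := by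
  rw [pay_extendedRPS, hp.sum_succ, hq.sum_succ]
  ring

theorem isNash_extendedRPS_iff {m n : ℕ} {p : Fin (m + 1) → ℝ} {q : Fin (n + 1) → ℝ} :
    isNash (extendedRPS m n) p q ↔ p = Pi.single 0 1 ∧ q = Pi.single 0 1 := by
  have he := isSimplex_single (0 : Fin (m + 1))
  have hf := isSimplex_single (0 : Fin (n + 1))
  constructor
  · rintro ⟨hp, hq, hrow, hcol⟩
    have hrow := hrow _ he
    have hcol := hcol _ hf
    rw [pay_extendedRPS_of_isSimplex he hq, pay_extendedRPS_of_isSimplex hp hq,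
      Pi.single_eq_same] at hrow
    rw [pay_extendedRPS_of_isSimplex hp hf, pay_extendedRPS_of_isSimplex hp hq,
      Pi.single_eq_same] at hcol
    exact ⟨hp.eq_single_of_apply_eq_one (by linarith [hp.apply_le_one 0]),
      hq.eq_single_of_apply_eq_one (by linarith [hq.apply_le_one 0])⟩
  · rintro ⟨rfl, rfl⟩
    refine ⟨he, hf, fun p' hp' => ?_, fun q' hq' => ?_⟩
    · rw [pay_extendedRPS_of_isSimplex hp' hf, pay_extendedRPS_of_isSimplex he hf]
      simpa using hp'.apply_le_one 0
    · rw [pay_extendedRPS_of_isSimplex he hq', pay_extendedRPS_of_isSimplex he hf]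
      simpa using hq'.apply_le_one 0

/-- The `k = 1` extended Rock-Paper-Scissors game has `(e₀, e₀)` as its unique Nash
equilibrium, with value `0`. -/
theorem stmt17 (m n : ℕ)
    (R : Matrix (Fin (m + 1)) (Fin (n + 1)) ℝ)
    (hR : R = Matrix.of fun i j =>
      if i = 0 ∧ j = 0 then (0 : ℝ)
      else if i = 0 then 1
      else if j = 0 then -1
      else 0)
    (e0m : Fin (m + 1) → ℝ) (he0m : e0m = Pi.single 0 1)
    (e0n : Fin (n + 1) → ℝ) (he0n : e0n = Pi.single 0 1) :
    isNash R e0m e0n ∧ (∀ p' q', isNash R p' q' → p' = e0m ∧ q' = e0n) ∧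
      pay R e0m e0n = 0 := by
  change R = extendedRPS m n at hR
  subst hR he0m he0n
  refine ⟨isNash_extendedRPS_iff.mpr ⟨rfl, rfl⟩, fun p q h => isNash_extendedRPS_iff.mp h, ?_⟩
  rw [pay_extendedRPS_of_isSimplex (isSimplex_single 0) (isSimplex_single 0), Pi.single_eq_same,
    Pi.single_eq_same, sub_self]
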